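/- arXiv:2308.01130 — 2 statements merged into one kernel-verified Lean document; each statement's English description precedes it below -/
import Mathlib

section
/- Let R be a finite-dimensional vector space with a nondegenerate symmetric bilinear form η, and for X ∈ End(R) let X^T denote the η-transpose, defined by η(X^T u, v) = η(u, X v). Then an invertible A ∈ GL(R) satisfies (A X A^{-1})^T = A X^T A^{-1} for all X ∈ End(R) if and only if there exists a nonzero scalar λ with η(Au, Av) = λ η(u,v) for all u, v. -/
/-!
Let `G` be the operator with `η (G u) v = η (A u) (A v)`. If conjugation by `A` commutes with
the transpose, then `G` commutes with every transpose `T X`; in finite dimension every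
endomorphism is a transpose, so `G` is central in `End R`, i.e. a scalar `λ`, and `λ` is the
conformal factor of `A`. Conversely, a conformal `A` rescales both sides of the defining identity
`η (T X u) v = η u (X v)` by the same factor.
-/

namespace LinearMap.BilinForm

variable {K V : Type*} [Field K] [AddCommGroup V] [Module K V] {B : LinearMap.BilinForm K V}

theorem nondegenerate_of_separatingLeft [FiniteDimensional K V] (hB : B.SeparatingLeft) :
    B.Nondegenerate := by
  refine ⟨hB, fun v hv => ?_⟩
  have hsurj : Function.Surjective B :=
    (LinearMap.injective_iff_surjective_of_finrank_eq_finrank Subspace.dual_finrank_eq.symm).mp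
      (LinearMap.ker_eq_bot.mp (LinearMap.separatingLeft_iff_ker_eq_bot.mp hB))
  refine (Module.forall_dual_apply_eq_zero_iff K v).mp fun φ => ?_
  obtain ⟨u, rfl⟩ := hsurj φ
  exact hv u

theorem exists_isAdjointPair_right [FiniteDimensional K V] (hB : B.Nondegenerate)
    (f : Module.End K V) : ∃ g : Module.End K V, IsAdjointPair B B f g :=
  ⟨B.flip.leftAdjointOfNondegenerate hB.flip f, fun x y =>
    (B.flip.isAdjointPairLeftAdjointOfNondegenerate hB.flip f y x).symm⟩

theorem isAdjointPair_conj {A : V ≃ₗ[K] V} {c : K} (hA : ∀ u v, B (A u) (A v) = c * B u v)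
    {f g : Module.End K V} (h : IsAdjointPair B B f g) :
    IsAdjointPair B B (A.conj f) (A.conj g) := fun x y => by
  simp only [LinearEquiv.conj_apply_apply]
  calc B (A (f (A.symm x))) y
      = B (A (f (A.symm x))) (A (A.symm y)) := by rw [A.apply_symm_apply]
    _ = c * B (A.symm x) (g (A.symm y)) := by rw [hA, h]
    _ = B x (A (g (A.symm y))) := by rw [← hA, A.apply_symm_apply]

theorem exists_conformal_of_isAdjointPair_conj [FiniteDimensional K V] (hB : B.Nondegenerate)
    (A : V ≃ₗ[K] V)
    (h : ∀ f g : Module.End K V,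
      IsAdjointPair B B f g → IsAdjointPair B B (A.conj f) (A.conj g)) :
    ∃ c : K, ∀ u v, B (A u) (A v) = c * B u v := by
  set G := symmCompOfNondegenerate (B.compl₁₂ (A : V →ₗ[K] V) (A : V →ₗ[K] V)) B hB
  have hG : ∀ u v, B (G u) v = B (A u) (A v) := fun u v =>
    symmCompOfNondegenerate_left_apply _ hB v u
  have hcomm : ∀ f : Module.End K V, f * G = G * f := by
    intro f
    obtain ⟨g, hfg⟩ := exists_isAdjointPair_right hB f
    refine B.compLeft_injective hB (LinearMap.ext₂ fun u v => ?_)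
    simp only [compLeft_apply, Module.End.mul_apply]
    calc B (f (G u)) v = B (A u) (A.conj g (A v)) := by
          rw [hfg, hG, A.conj_apply_apply, A.symm_apply_apply]
      _ = B (A.conj f (A u)) (A v) := (h f g hfg _ _).symm
      _ = B (G (f u)) v := by rw [hG, A.conj_apply_apply, A.symm_apply_apply]
  obtain ⟨c, _, hc⟩ := Module.End.mem_center_iff.mp (Semigroup.mem_center_iff.mpr hcomm)
  exact ⟨c, fun u v => by simp [← hG, hc]⟩

theorem ne_zero_of_conformal [Nontrivial V] (hB : B.SeparatingLeft) {A : V ≃ₗ[K] V} {c : K}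
    (hA : ∀ u v, B (A u) (A v) = c * B u v) : c ≠ 0 := by
  rintro rfl
  obtain ⟨u, hu⟩ := exists_ne (0 : V)
  refine hu (A.map_eq_zero_iff.mp (hB _ fun w => ?_))
  simpa using hA u (A.symm w)

end LinearMap.BilinForm

theorem transpose_equivariant_iff_conformal_general
    (R : Type*) [AddCommGroup R] [Module ℝ R] [FiniteDimensional ℝ R]
    (η : R →ₗ[ℝ] R →ₗ[ℝ] ℝ)
    (hnd : ∀ u : R, (∀ v : R, η u v = 0) → u = 0)
    (T : Module.End ℝ R → Module.End ℝ R)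
    (hT : ∀ (X : Module.End ℝ R) (u v : R), η (T X u) v = η u (X v))
    (A : R ≃ₗ[ℝ] R) :
    (∀ X : Module.End ℝ R,
        T (A.toLinearMap ∘ₗ X ∘ₗ A.symm.toLinearMap)
          = A.toLinearMap ∘ₗ T X ∘ₗ A.symm.toLinearMap) ↔
      ∃ lam : ℝ, lam ≠ 0 ∧ ∀ u v : R, η (A u) (A v) = lam * η u v := by
  have hη : η.Nondegenerate := LinearMap.BilinForm.nondegenerate_of_separatingLeft hnd
  have T_eq : ∀ f X : Module.End ℝ R, LinearMap.IsAdjointPair η η f X → T X = f :=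
    fun f X hfX =>
      LinearMap.BilinForm.isAdjointPair_unique_of_nondegenerate η hη X _ _ (hT X) hfX
  constructor
  · intro hTA
    obtain ⟨c, hc⟩ :=
      LinearMap.BilinForm.exists_conformal_of_isAdjointPair_conj hη A fun f X hfX => by
        have hconj : T (A.conj X) = A.conj f := T_eq f X hfX ▸ hTA X
        exact hconj ▸ hT (A.conj X)
    rcases subsingleton_or_nontrivial R with hR | hR
    · exact ⟨1, one_ne_zero, fun u v => by simp [Subsingleton.elim u 0]⟩
    · exact ⟨c, LinearMap.BilinForm.ne_zero_of_conformal hnd hc, hc⟩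
  · rintro ⟨lam, -, hlam⟩ X
    exact T_eq _ _ (LinearMap.BilinForm.isAdjointPair_conj hlam (hT X))

/-- Let `R` be a finite-dimensional real vector space with a nondegenerate
symmetric bilinear form `η`, and let `T X` denote the `η`-transpose of an
endomorphism `X` (so `η(T X u, v) = η(u, X v)`). Then an invertible `A`
commutes with the transpose in the sense `(A X A⁻¹)ᵀ = A Xᵀ A⁻¹` for all `X`
if and only if there is a nonzero scalar `λ` with `η(Au, Av) = λ η(u,v)`. -/
theorem transpose_equivariant_iff_conformal
    (R : Type*) [AddCommGroup R] [Module ℝ R] [FiniteDimensional ℝ R]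
    (η : R →ₗ[ℝ] R →ₗ[ℝ] ℝ)
    (hsymm : ∀ u v : R, η u v = η v u)
    (hnd : ∀ u : R, (∀ v : R, η u v = 0) → u = 0)
    (T : Module.End ℝ R → Module.End ℝ R)
    (hT : ∀ (X : Module.End ℝ R) (u v : R), η (T X u) v = η u (X v))
    (A : R ≃ₗ[ℝ] R) :
    (∀ X : Module.End ℝ R,
        T (A.toLinearMap ∘ₗ X ∘ₗ A.symm.toLinearMap)
          = A.toLinearMap ∘ₗ T X ∘ₗ A.symm.toLinearMap) ↔
      ∃ lam : ℝ, lam ≠ 0 ∧ ∀ u v : R, η (A u) (A v) = lam * η u v :=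
  transpose_equivariant_iff_conformal_general R η hnd T hT A
end

section
/- Let V be a 7-dimensional real vector space. Define a bracket on 𝔰 = ℝ ⊕ Λ³V^* ⊕ Λ⁶V^* by [(c₀,c₃,c₆),(c₀',c₃',c₆')] = (0, c₀c₃' − c₀'c₃, 2c₀c₆' − 2c₀'c₆ − c₃ ∧ c₃'). This bracket is antisymmetric and satisfies the Jacobi identity, so 𝔰 is a Lie algebra. -/
/-!
The only input beyond linear algebra is that 3-forms anticommute: the exterior algebra is graded
commutative, `x ∧ y = (-1)^(pq) y ∧ x` for `x` of degree `p` and `y` of degree `q`, and `3 · 3` is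
odd. Granting `c₃ ∧ c₃' = -c₃' ∧ c₃`, antisymmetry and the Jacobi identity are identities between
linear combinations of the components, and closure holds because `⋀³ ∧ ⋀³ ⊆ ⋀⁶`.
-/

namespace ExteriorAlgebra

variable {R M : Type*} [CommRing R] [AddCommGroup M] [Module R M]

theorem mul_ι_of_mem_exteriorPower {n : ℕ} {x : ExteriorAlgebra R M} (hx : x ∈ ⋀[R]^n M)
    (m : M) : x * ι R m = (-1 : R) ^ n • (ι R m * x) := by
  induction hx using Submodule.pow_induction_on_left' with
  | algebraMap r => simp [Algebra.commutes]
  | add x y i _ _ ihx ihy => simp [add_mul, mul_add, ihx, ihy]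
  | mem_mul a ha i x hx ih =>
    obtain ⟨b, rfl⟩ := ha
    have hswap : ι R b * ι R m = -(ι R m * ι R b) :=
      eq_neg_of_add_eq_zero_left (ι_add_mul_swap b m)
    rw [mul_assoc, ih, mul_smul_comm, ← mul_assoc, hswap, pow_succ]
    simp [mul_assoc, mul_comm]

theorem mul_comm_of_mem_exteriorPower {p q : ℕ} {x y : ExteriorAlgebra R M}
    (hx : x ∈ ⋀[R]^p M) (hy : y ∈ ⋀[R]^q M) : x * y = (-1 : R) ^ (p * q) • (y * x) := by
  induction hy using Submodule.pow_induction_on_left' with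
  | algebraMap r => simp [Algebra.commutes]
  | add a b i _ _ iha ihb => simp [mul_add, add_mul, iha, ihb]
  | mem_mul a ha i z hz ih =>
    obtain ⟨b, rfl⟩ := ha
    rw [← mul_assoc, mul_ι_of_mem_exteriorPower hx b, smul_mul_assoc, mul_assoc, ih,
      mul_smul_comm, smul_smul, mul_assoc, Nat.mul_succ, pow_add, mul_comm]

theorem mul_eq_neg_mul_of_odd {p q : ℕ} (hp : Odd p) (hq : Odd q) {x y : ExteriorAlgebra R M}
    (hx : x ∈ ⋀[R]^p M) (hy : y ∈ ⋀[R]^q M) : x * y = -(y * x) := by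
  rw [mul_comm_of_mem_exteriorPower hx hy, (hp.mul hq).neg_one_pow, neg_one_smul]

end ExteriorAlgebra

/-- The hemisemidirect-type bracket on `𝔰 = ℝ ⊕ Λ³V* ⊕ Λ⁶V*`:
`[(c₀,c₃,c₆),(c₀',c₃',c₆')] = (0, c₀c₃' - c₀'c₃, 2c₀c₆' - 2c₀'c₆ - c₃ ∧ c₃')`.
Forms of degree `k` are modelled as elements of the `k`-th exterior power
`⋀[ℝ]^k V*` inside the exterior algebra of `V* = Module.Dual ℝ V`, with the
wedge product given by the exterior algebra multiplication. -/
noncomputable def sBracket (V : Type*) [AddCommGroup V] [Module ℝ V] :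
    (ℝ × ExteriorAlgebra ℝ (Module.Dual ℝ V) × ExteriorAlgebra ℝ (Module.Dual ℝ V)) →
    (ℝ × ExteriorAlgebra ℝ (Module.Dual ℝ V) × ExteriorAlgebra ℝ (Module.Dual ℝ V)) →
    (ℝ × ExteriorAlgebra ℝ (Module.Dual ℝ V) × ExteriorAlgebra ℝ (Module.Dual ℝ V)) :=
  fun u v =>
    (0, u.1 • v.2.1 - v.1 • u.2.1,
     (2 * u.1) • v.2.2 - (2 * v.1) • u.2.2 - u.2.1 * v.2.1)

section sBracket

variable {V : Type*} [AddCommGroup V] [Module ℝ V]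
  {u v w : ℝ × ExteriorAlgebra ℝ (Module.Dual ℝ V) × ExteriorAlgebra ℝ (Module.Dual ℝ V)}

theorem sBracket_mem_exteriorPower
    (hu₃ : u.2.1 ∈ ⋀[ℝ]^3 (Module.Dual ℝ V)) (hu₆ : u.2.2 ∈ ⋀[ℝ]^6 (Module.Dual ℝ V))
    (hv₃ : v.2.1 ∈ ⋀[ℝ]^3 (Module.Dual ℝ V)) (hv₆ : v.2.2 ∈ ⋀[ℝ]^6 (Module.Dual ℝ V)) :
    (sBracket V u v).2.1 ∈ ⋀[ℝ]^3 (Module.Dual ℝ V) ∧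
      (sBracket V u v).2.2 ∈ ⋀[ℝ]^6 (Module.Dual ℝ V) :=
  ⟨sub_mem (Submodule.smul_mem _ _ hv₃) (Submodule.smul_mem _ _ hu₃),
    sub_mem (sub_mem (Submodule.smul_mem _ _ hv₆) (Submodule.smul_mem _ _ hu₆))
      (SetLike.mul_mem_graded hu₃ hv₃ : u.2.1 * v.2.1 ∈ ⋀[ℝ]^(3 + 3) (Module.Dual ℝ V))⟩

theorem sBracket_eq_neg_sBracket (huv : u.2.1 * v.2.1 = -(v.2.1 * u.2.1)) :
    sBracket V u v = -sBracket V v u := by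
  refine Prod.ext (by simp [sBracket]) (Prod.ext ?_ ?_) <;>
    simp only [sBracket, huv, Prod.fst_neg, Prod.snd_neg] <;> module

theorem sBracket_jacobi (huv : v.2.1 * u.2.1 = -(u.2.1 * v.2.1))
    (hvw : w.2.1 * v.2.1 = -(v.2.1 * w.2.1)) (hwu : w.2.1 * u.2.1 = -(u.2.1 * w.2.1)) :
    sBracket V (sBracket V u v) w + sBracket V (sBracket V v w) u +
      sBracket V (sBracket V w u) v = 0 := by
  refine Prod.ext (by simp [sBracket]) (Prod.ext ?_ ?_) <;>
    simp only [sBracket, sub_mul, smul_mul_assoc, huv, hvw, hwu, Prod.fst_add, Prod.snd_add,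
      zero_smul, mul_zero, Prod.fst_zero, Prod.snd_zero] <;> module

end sBracket

theorem sBracket_antisymm_and_jacobi_general
    (V : Type*) [AddCommGroup V] [Module ℝ V]
    (S : Set (ℝ × ExteriorAlgebra ℝ (Module.Dual ℝ V) ×
              ExteriorAlgebra ℝ (Module.Dual ℝ V)))
    (hS : S = {u | u.2.1 ∈ ⋀[ℝ]^3 (Module.Dual ℝ V) ∧
                   u.2.2 ∈ ⋀[ℝ]^6 (Module.Dual ℝ V)}) :
    -- the bracket is closed on 𝔰
    (∀ u ∈ S, ∀ v ∈ S, sBracket V u v ∈ S) ∧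
    -- antisymmetry
    (∀ u ∈ S, ∀ v ∈ S, sBracket V u v = -sBracket V v u) ∧
    -- Jacobi identity
    (∀ u ∈ S, ∀ v ∈ S, ∀ w ∈ S,
      sBracket V (sBracket V u v) w + sBracket V (sBracket V v w) u +
        sBracket V (sBracket V w u) v = 0) := by
  subst hS
  have anticomm {x y : ExteriorAlgebra ℝ (Module.Dual ℝ V)} (hx : x ∈ ⋀[ℝ]^3 (Module.Dual ℝ V))
      (hy : y ∈ ⋀[ℝ]^3 (Module.Dual ℝ V)) : x * y = -(y * x) :=
    ExteriorAlgebra.mul_eq_neg_mul_of_odd (by decide) (by decide) hx hy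
  refine ⟨?_, ?_, ?_⟩
  · rintro u ⟨hu₃, hu₆⟩ v ⟨hv₃, hv₆⟩
    exact sBracket_mem_exteriorPower hu₃ hu₆ hv₃ hv₆
  · rintro u ⟨hu₃, -⟩ v ⟨hv₃, -⟩
    exact sBracket_eq_neg_sBracket (anticomm hu₃ hv₃)
  · rintro u ⟨hu₃, -⟩ v ⟨hv₃, -⟩ w ⟨hw₃, -⟩
    exact sBracket_jacobi (anticomm hv₃ hu₃) (anticomm hw₃ hv₃) (anticomm hw₃ hu₃)

/-- For a 7-dimensional real vector space `V`, the bracket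
`[(c₀,c₃,c₆),(c₀',c₃',c₆')] = (0, c₀c₃' - c₀'c₃, 2c₀c₆' - 2c₀'c₆ - c₃ ∧ c₃')`
on `𝔰 = ℝ ⊕ Λ³V* ⊕ Λ⁶V*` is antisymmetric and satisfies the Jacobi identity,
so `𝔰` is a Lie algebra.  (Elements of `𝔰` are triples whose second and third
components lie in the graded pieces `⋀[ℝ]^3 V*` and `⋀[ℝ]^6 V*`.) -/
theorem sBracket_antisymm_and_jacobi
    (V : Type*) [AddCommGroup V] [Module ℝ V] [FiniteDimensional ℝ V]
    (hdim : Module.finrank ℝ V = 7)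
    (S : Set (ℝ × ExteriorAlgebra ℝ (Module.Dual ℝ V) ×
              ExteriorAlgebra ℝ (Module.Dual ℝ V)))
    (hS : S = {u | u.2.1 ∈ ⋀[ℝ]^3 (Module.Dual ℝ V) ∧
                   u.2.2 ∈ ⋀[ℝ]^6 (Module.Dual ℝ V)}) :
    -- the bracket is closed on 𝔰
    (∀ u ∈ S, ∀ v ∈ S, sBracket V u v ∈ S) ∧
    -- antisymmetry
    (∀ u ∈ S, ∀ v ∈ S, sBracket V u v = -sBracket V v u) ∧
    -- Jacobi identity
    (∀ u ∈ S, ∀ v ∈ S, ∀ w ∈ S,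
      sBracket V (sBracket V u v) w + sBracket V (sBracket V v w) u +
        sBracket V (sBracket V w u) v = 0) :=
  sBracket_antisymm_and_jacobi_general V S hS
end
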